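/- Let E be a directed graph, K a field, and suppose c is a cycle in E based at a vertex v (i.e., s(c) = v = r(c)) and e is an exit for c with s(e) = v. Then the left L_K(E)-module L_K(E)v decomposes as a direct sum L_K(E)v = L_K(E)cc* ⊕ L_K(E)(v - cc*), where the summand L_K(E)cc* is isomorphic to L_K(E)v as a left L_K(E)-module and the summand L_K(E)(v - cc*) is nonzero. In particular, L_K(E)v has a nontrivial direct summand isomorphic to itself. -/

import Mathlib

set_option synthInstance.maxHeartbeats 1000000
set_option maxHeartbeats 1000000

/-- Generators of the Leavitt path algebra: vertices, edges, and ghost edges. -/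
inductive LPAGen (V E : Type) : Type
  | vertex : V → LPAGen V E
  | edge : E → LPAGen V E
  | ghost : E → LPAGen V E

/-- The defining relations of the Leavitt path algebra of the graph with vertex set `V`,
edge set `E`, and source and range maps `s r : E → V`.  The (CK2) relation is imposed at
every regular vertex, i.e. every vertex emitting finitely many but at least one edge. -/
inductive LPARel (K : Type) [Field K] {V E : Type} (s r : E → V) :
    FreeAlgebra K (LPAGen V E) → FreeAlgebra K (LPAGen V E) → Prop
  | vertex_self (v : V) :
      LPARel K s r (FreeAlgebra.ι K (LPAGen.vertex v) * FreeAlgebra.ι K (LPAGen.vertex v))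
        (FreeAlgebra.ι K (LPAGen.vertex v))
  | vertex_ne {v w : V} (h : v ≠ w) :
      LPARel K s r (FreeAlgebra.ι K (LPAGen.vertex v) * FreeAlgebra.ι K (LPAGen.vertex w)) 0
  | edge_left (e : E) :
      LPARel K s r (FreeAlgebra.ι K (LPAGen.vertex (s e)) * FreeAlgebra.ι K (LPAGen.edge e))
        (FreeAlgebra.ι K (LPAGen.edge e))
  | edge_right (e : E) :
      LPARel K s r (FreeAlgebra.ι K (LPAGen.edge e) * FreeAlgebra.ι K (LPAGen.vertex (r e)))
        (FreeAlgebra.ι K (LPAGen.edge e))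
  | ghost_left (e : E) :
      LPARel K s r (FreeAlgebra.ι K (LPAGen.vertex (r e)) * FreeAlgebra.ι K (LPAGen.ghost e))
        (FreeAlgebra.ι K (LPAGen.ghost e))
  | ghost_right (e : E) :
      LPARel K s r (FreeAlgebra.ι K (LPAGen.ghost e) * FreeAlgebra.ι K (LPAGen.vertex (s e)))
        (FreeAlgebra.ι K (LPAGen.ghost e))
  | ck1_self (e : E) :
      LPARel K s r (FreeAlgebra.ι K (LPAGen.ghost e) * FreeAlgebra.ι K (LPAGen.edge e))
        (FreeAlgebra.ι K (LPAGen.vertex (r e)))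
  | ck1_ne {e f : E} (h : e ≠ f) :
      LPARel K s r (FreeAlgebra.ι K (LPAGen.ghost e) * FreeAlgebra.ι K (LPAGen.edge f)) 0
  | ck2 (v : V) (h : {e : E | s e = v}.Finite) (hne : {e : E | s e = v}.Nonempty) :
      LPARel K s r (FreeAlgebra.ι K (LPAGen.vertex v))
        (h.toFinset.sum fun e => FreeAlgebra.ι K (LPAGen.edge e) * FreeAlgebra.ι K (LPAGen.ghost e))

/-- The unital algebra presented by the Leavitt path algebra generators and relations
(for a graph with possibly infinitely many vertices this is the unitalization of the
Leavitt path algebra; the honest Leavitt path algebra is the non-unital subalgebra `lpa`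
generated by the generators, defined below). -/
abbrev LPAU (K : Type) [Field K] {V E : Type} (s r : E → V) : Type :=
  RingQuot (LPARel K s r)

variable (K : Type) [Field K] {V E : Type} (s r : E → V)

/-- The canonical image of a generator. -/
def gen (g : LPAGen V E) : LPAU K s r :=
  RingQuot.mkAlgHom K (LPARel K s r) (FreeAlgebra.ι K g)

def vertexEl (v : V) : LPAU K s r := gen K s r (LPAGen.vertex v)
def edgeEl (e : E) : LPAU K s r := gen K s r (LPAGen.edge e)
def ghostEl (e : E) : LPAU K s r := gen K s r (LPAGen.ghost e)

/-- The Leavitt path algebra `L_K(E)` of an arbitrary graph, realized (honestly, i.e.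
without an adjoined unit) as the non-unital subalgebra generated by the vertices, edges
and ghost edges. -/
def lpa : NonUnitalSubalgebra K (LPAU K s r) :=
  NonUnitalAlgebra.adjoin K (Set.range (gen K s r))

def vertexIn (v : V) : ↥(lpa K s r) :=
  ⟨vertexEl K s r v, NonUnitalAlgebra.subset_adjoin K (Set.mem_range_self _)⟩

def edgeIn (e : E) : ↥(lpa K s r) :=
  ⟨edgeEl K s r e, NonUnitalAlgebra.subset_adjoin K (Set.mem_range_self _)⟩

def ghostIn (e : E) : ↥(lpa K s r) :=
  ⟨ghostEl K s r e, NonUnitalAlgebra.subset_adjoin K (Set.mem_range_self _)⟩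

instance lpaNonUnitalRing : NonUnitalRing ↥(lpa K s r) := inferInstance
instance lpaAddCommGroup : AddCommGroup ↥(lpa K s r) := inferInstance
instance lpaModule : Module K ↥(lpa K s r) := inferInstance

/-- The element `v · e₁ e₂ ⋯ eₙ` of the algebra corresponding to a path starting at `v`
with edge list `es` (for the empty path this is the vertex `v` itself). -/
def pathEl (v : V) (es : List E) : LPAU K s r :=
  vertexEl K s r v * (es.map (edgeEl K s r)).prod

/-- The element `eₙ* ⋯ e₂* e₁* · v` corresponding to the ghost path `α*` of the path `α`
starting at `v` with edge list `es`. -/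
def ghostPathEl (v : V) (es : List E) : LPAU K s r :=
  (es.reverse.map (ghostEl K s r)).prod * vertexEl K s r v

/-- Paths in a directed graph: `IsPathFrom s r v w es` means the list of edges `es` is a
directed path from `v` to `w` (each vertex is a path of length `0`). -/
inductive IsPathFrom {V E : Type} (s r : E → V) : V → V → List E → Prop
  | nil (v : V) : IsPathFrom s r v v []
  | cons (e : E) {w : V} {es : List E} :
      IsPathFrom s r (r e) w es → IsPathFrom s r (s e) w (e :: es)

/-- `v ≥ w` : there is a path from `v` to `w`. -/
def Geq {V E : Type} (s r : E → V) (v w : V) : Prop :=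
  ∃ es : List E, IsPathFrom s r v w es

/-- A cycle based at `v` : a nonempty closed path whose source vertices are pairwise
distinct. -/
def IsCycle {V E : Type} (s r : E → V) (v : V) (es : List E) : Prop :=
  es ≠ [] ∧ IsPathFrom s r v v es ∧ (es.map s).Nodup

/-- A path (given by its list of edges) has an exit. -/
def HasExit {V E : Type} (s : E → V) (es : List E) : Prop :=
  ∃ f : E, ∃ e ∈ es, s f = s e ∧ f ≠ e

/-- A set of vertices is hereditary. -/
def Hereditary {V E : Type} (s r : E → V) (X : Set V) : Prop :=
  ∀ v ∈ X, ∀ w : V, Geq s r v w → w ∈ X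

/-- A set of vertices is saturated. -/
def Saturated {V E : Type} (s r : E → V) (X : Set V) : Prop :=
  ∀ v : V, {e : E | s e = v}.Finite → {e : E | s e = v}.Nonempty →
    (∀ e : E, s e = v → r e ∈ X) → v ∈ X

/-! Since `c*c = v`, the element `cc*` is an idempotent below `v`, so `L v = L cc* ⊕ L (v - cc*)`,
and right multiplication by `c` and `c*` identifies `L cc*` with `L c*c = L v`.
The summand `L (v - cc*)` is nonzero because `v - cc*` acts nontrivially on the space of boundary
paths: if `f` is the exit and `y` a boundary path from `r f`, then `v` fixes the boundary path
`f y` while the first ghost edge of `c*` kills it: as the edges of the cycle `c` have distinct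
sources, `f` is not the first edge of `c`. -/

section LeftIdeals
variable {R : Type*} [Ring R] {e p x y : R}

lemma Submodule.span_singleton_eq_span_sup_span_sub (he : IsIdempotentElem e) (hpe : p * e = p) :
    span R {e} = span R {p} ⊔ span R {e - p} := by
  apply le_antisymm
  · rw [span_singleton_le_iff_mem, mem_sup]
    exact ⟨p, mem_span_singleton_self p, e - p, mem_span_singleton_self (e - p),
      add_sub_cancel p e⟩
  · refine sup_le ?_ ?_ <;> rw [span_singleton_le_iff_mem, mem_span_singleton]
    · exact ⟨p, hpe⟩
    · exact ⟨e - p, by rw [smul_eq_mul, sub_mul, he.eq, hpe]⟩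

lemma Submodule.span_inf_span_sub_eq_bot (hp : IsIdempotentElem p) (hep : e * p = p) :
    span R {p} ⊓ span R {e - p} = ⊥ := by
  refine eq_bot_iff.mpr fun a ha => ?_
  obtain ⟨⟨c, rfl⟩, ⟨d, hd⟩⟩ :=
    And.imp mem_span_singleton.mp mem_span_singleton.mp (mem_inf.mp ha)
  have h0 : c • p * p = 0 := by
    rw [← hd, smul_eq_mul, mul_assoc, sub_mul, hep, hp.eq, sub_self, mul_zero]
  rw [mem_bot, ← h0, smul_eq_mul, mul_assoc, hp.eq]

-- `LinearMap.toSpanSingleton R R x` is right multiplication by `x`.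
def Submodule.spanMulEquivSpanMul (h : x * y * x = x) : span R {x * y} ≃ₗ[R] span R {y * x} :=
  have hc (c : R) : c * x * y * x = c * x := by
    rw [mul_assoc (c * x), mul_assoc c, ← mul_assoc x, h]
  LinearEquiv.ofLinearMap
    ((LinearMap.toSpanSingleton R R x).restrict fun a ha => by
      obtain ⟨c, rfl⟩ := mem_span_singleton.mp ha
      refine mem_span_singleton.mpr ⟨c * x, ?_⟩
      simp only [LinearMap.toSpanSingleton_apply, smul_eq_mul, ← mul_assoc, hc])
    ((LinearMap.toSpanSingleton R R y).restrict fun a ha => by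
      obtain ⟨c, rfl⟩ := mem_span_singleton.mp ha
      refine mem_span_singleton.mpr ⟨c * y, ?_⟩
      simp only [LinearMap.toSpanSingleton_apply, smul_eq_mul, ← mul_assoc])
    (by
      ext ⟨a, ha⟩
      obtain ⟨c, rfl⟩ := mem_span_singleton.mp ha
      simp [← mul_assoc, hc])
    (by
      ext ⟨a, ha⟩
      obtain ⟨c, rfl⟩ := mem_span_singleton.mp ha
      simp [← mul_assoc, hc])

end LeftIdeals

section PathElements
variable {K s r}

lemma vertexEl_mul_self (v : V) : vertexEl K s r v * vertexEl K s r v = vertexEl K s r v := by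
  simpa [vertexEl, gen] using RingQuot.mkAlgHom_rel K (LPARel.vertex_self (s := s) (r := r) v)

lemma vertexEl_mul_edgeEl (e : E) : vertexEl K s r (s e) * edgeEl K s r e = edgeEl K s r e := by
  simpa [vertexEl, edgeEl, gen] using
    RingQuot.mkAlgHom_rel K (LPARel.edge_left (s := s) (r := r) e)

lemma edgeEl_mul_vertexEl (e : E) : edgeEl K s r e * vertexEl K s r (r e) = edgeEl K s r e := by
  simpa [vertexEl, edgeEl, gen] using
    RingQuot.mkAlgHom_rel K (LPARel.edge_right (s := s) (r := r) e)

lemma ghostEl_mul_vertexEl (e : E) : ghostEl K s r e * vertexEl K s r (s e) = ghostEl K s r e := by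
  simpa [vertexEl, ghostEl, gen] using
    RingQuot.mkAlgHom_rel K (LPARel.ghost_right (s := s) (r := r) e)

lemma ghostEl_mul_edgeEl (e : E) : ghostEl K s r e * edgeEl K s r e = vertexEl K s r (r e) := by
  simpa [vertexEl, edgeEl, ghostEl, gen] using
    RingQuot.mkAlgHom_rel K (LPARel.ck1_self (s := s) (r := r) e)

lemma vertexEl_mul_pathEl (v : V) (es : List E) :
    vertexEl K s r v * pathEl K s r v es = pathEl K s r v es := by
  rw [pathEl, ← mul_assoc, vertexEl_mul_self]

lemma ghostPathEl_mul_vertexEl (v : V) (es : List E) :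
    ghostPathEl K s r v es * vertexEl K s r v = ghostPathEl K s r v es := by
  rw [ghostPathEl, mul_assoc, vertexEl_mul_self]

lemma IsPathFrom.prod_edgeEl_mul_vertexEl {v w : V} {es : List E} (h : IsPathFrom s r v w es) :
    (es.map (edgeEl K s r)).prod * vertexEl K s r w =
      vertexEl K s r v * (es.map (edgeEl K s r)).prod := by
  induction h with
  | nil v => simp
  | cons e _ ih =>
    rw [List.map_cons, List.prod_cons, mul_assoc, ih, ← mul_assoc, edgeEl_mul_vertexEl,
      ← mul_assoc, vertexEl_mul_edgeEl]

lemma IsPathFrom.prod_ghostEl_mul_pathEl {v w : V} {es : List E} (h : IsPathFrom s r v w es) :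
    (es.reverse.map (ghostEl K s r)).prod * pathEl K s r v es = vertexEl K s r w := by
  induction h with
  | nil v => simp [pathEl]
  | cons e _ ih =>
    simp only [pathEl, List.reverse_cons, List.map_append, List.prod_append, List.map_cons,
      List.prod_cons, List.map_nil, List.prod_nil, mul_one, mul_assoc] at ih ⊢
    rw [← mul_assoc (ghostEl K s r e), ghostEl_mul_vertexEl, ← mul_assoc (ghostEl K s r e),
      ghostEl_mul_edgeEl, ih]

lemma IsPathFrom.ghostPathEl_mul_pathEl {v w : V} {es : List E} (h : IsPathFrom s r v w es) :
    ghostPathEl K s r v es * pathEl K s r v es = vertexEl K s r w := by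
  rw [ghostPathEl, mul_assoc, vertexEl_mul_pathEl, h.prod_ghostEl_mul_pathEl]

lemma IsPathFrom.pathEl_mul_vertexEl {v w : V} {es : List E} (h : IsPathFrom s r v w es) :
    pathEl K s r v es * vertexEl K s r w = pathEl K s r v es := by
  rw [pathEl, mul_assoc, h.prod_edgeEl_mul_vertexEl, ← mul_assoc, vertexEl_mul_self]

end PathElements

namespace IsPathFrom
variable {s r} {v w : V} {e : E} {es : List E}

lemma source_eq (h : IsPathFrom s r v w (e :: es)) : v = s e := by
  cases h; rfl

lemma tail (h : IsPathFrom s r v w (e :: es)) : IsPathFrom s r (r e) w es := by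
  cases h; assumption

end IsPathFrom

def IsRegularVertex (v : V) : Prop :=
  {e : E | s e = v}.Finite ∧ {e : E | s e = v}.Nonempty

structure FiniteBoundaryPath where
  source : V
  target : V
  edges : List E
  isPathFrom : IsPathFrom s r source target edges
  not_isRegularVertex : ¬ IsRegularVertex s target

structure InfinitePath where
  edge : ℕ → E
  source_succ (n : ℕ) : s (edge (n + 1)) = r (edge n)

def BoundaryPath : Type := FiniteBoundaryPath s r ⊕ InfinitePath s r

namespace BoundaryPath
variable {s r}

def source : BoundaryPath s r → V
  | .inl x => x.source
  | .inr x => s (x.edge 0)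

def cons (e : E) : (x : BoundaryPath s r) → x.source = r e → BoundaryPath s r
  | .inl ⟨_, w, es, hpath, hw⟩, h => .inl ⟨s e, w, e :: es, .cons e (h ▸ hpath), hw⟩
  | .inr ⟨p, hp⟩, h => .inr ⟨fun | 0 => e | n + 1 => p n, fun | 0 => h | n + 1 => hp n⟩

def decons : BoundaryPath s r → Option (E × BoundaryPath s r)
  | .inl ⟨_, _, [], _, _⟩ => none
  | .inl ⟨_, w, e :: es, hpath, hw⟩ => some (e, .inl ⟨r e, w, es, hpath.tail, hw⟩)
  | .inr ⟨p, hp⟩ => some (p 0, .inr ⟨fun n => p (n + 1), fun n => hp (n + 1)⟩)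

lemma source_cons (e : E) (x : BoundaryPath s r) (h : x.source = r e) :
    (x.cons e h).source = s e := by
  rcases x with _ | _ <;> rfl

lemma decons_cons (e : E) (x : BoundaryPath s r) (h : x.source = r e) :
    (x.cons e h).decons = some (e, x) := by
  rcases x with ⟨v, w, es, hpath, hw⟩ | _
  · obtain rfl : v = r e := h
    rfl
  · rfl

lemma eq_cons_of_decons_eq_some {x y : BoundaryPath s r} {e : E}
    (h : x.decons = some (e, y)) : ∃ hy : y.source = r e, x = y.cons e hy := by
  rcases x with ⟨v, w, _ | ⟨e', es⟩, hpath, hw⟩ | ⟨p, hp⟩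
  · cases h
  · obtain ⟨rfl, rfl⟩ := Prod.mk.inj (Option.some.inj h)
    obtain rfl := hpath.source_eq
    exact ⟨rfl, rfl⟩
  · obtain ⟨rfl, rfl⟩ := Prod.mk.inj (Option.some.inj h)
    refine ⟨hp 0, congrArg Sum.inr ?_⟩
    congr
    funext n
    cases n <;> rfl

lemma not_isRegularVertex_of_decons_eq_none {x : BoundaryPath s r} (h : x.decons = none) :
    ¬ IsRegularVertex s x.source := by
  rcases x with ⟨v, w, _ | _, hpath, hw⟩ | _
  · cases hpath
    exact hw
  · cases h
  · cases h

/-- If no path from `w` ends at a non-regular vertex, every vertex reachable from `w` emits an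
edge whose range is again of this kind, which gives an infinite path from `w`. -/
lemma exists_source_eq (w : V) : ∃ x : BoundaryPath s r, x.source = w := by
  let S : Set V := {u | ∃ z es, IsPathFrom s r u z es ∧ ¬ IsRegularVertex s z}
  by_cases hw : w ∈ S
  · obtain ⟨z, es, hpath, hz⟩ := hw
    exact ⟨.inl ⟨w, z, es, hpath, hz⟩, rfl⟩
  have step (u : V) (hu : u ∉ S) : ∃ e, s e = u ∧ r e ∉ S := by
    by_contra! hcon
    have hreg : IsRegularVertex s u := not_not.mp fun hs => hu ⟨u, [], .nil u, hs⟩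
    obtain ⟨e, he⟩ := hreg.2
    obtain ⟨z, es, hpath, hz⟩ := hcon e he
    exact hu ⟨z, e :: es, he ▸ .cons e hpath, hz⟩
  choose g hg_source hg_range using fun u : {u // u ∉ S} => step u.1 u.2
  let q (n : ℕ) : {u // u ∉ S} := Nat.rec ⟨w, hw⟩ (fun _ u => ⟨r (g u), hg_range u⟩) n
  exact ⟨.inr ⟨fun n => g (q n), fun n => hg_source _⟩, hg_source _⟩

end BoundaryPath

section Representation
open BoundaryPath

open Classical in
noncomputable def genAction : LPAGen V E → BoundaryPath s r → (BoundaryPath s r →₀ K)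
  | .vertex v, x => if x.source = v then .single x 1 else 0
  | .edge e, x => if h : x.source = r e then .single (x.cons e h) 1 else 0
  | .ghost e, x =>
      match x.decons with
      | some (e', y) => if e' = e then .single y 1 else 0
      | none => 0

noncomputable def genOp (g : LPAGen V E) : Module.End K (BoundaryPath s r →₀ K) :=
  Finsupp.linearCombination K (genAction K s r g)

variable {K s r}

@[simp]
lemma genOp_single (g : LPAGen V E) (x : BoundaryPath s r) (c : K) :
    genOp K s r g (.single x c) = c • genAction K s r g x :=
  Finsupp.linearCombination_single K c x

lemma genOp_vertex_mul_self (v : V) :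
    genOp K s r (.vertex v) * genOp K s r (.vertex v) = genOp K s r (.vertex v) := by
  refine Finsupp.lhom_ext fun x b => ?_
  by_cases h : x.source = v <;> simp [genAction, h]

lemma genOp_vertex_mul_vertex_of_ne {v w : V} (hvw : v ≠ w) :
    genOp K s r (.vertex v) * genOp K s r (.vertex w) = 0 := by
  refine Finsupp.lhom_ext fun x b => ?_
  by_cases h : x.source = w <;> simp [genAction, h, hvw.symm]

lemma genOp_vertex_mul_edge (e : E) :
    genOp K s r (.vertex (s e)) * genOp K s r (.edge e) = genOp K s r (.edge e) := by
  refine Finsupp.lhom_ext fun x b => ?_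
  by_cases h : x.source = r e <;> simp [genAction, h, source_cons]

lemma genOp_edge_mul_vertex (e : E) :
    genOp K s r (.edge e) * genOp K s r (.vertex (r e)) = genOp K s r (.edge e) := by
  refine Finsupp.lhom_ext fun x b => ?_
  by_cases h : x.source = r e <;> simp [genAction, h]

lemma genOp_vertex_mul_ghost (e : E) :
    genOp K s r (.vertex (r e)) * genOp K s r (.ghost e) = genOp K s r (.ghost e) := by
  refine Finsupp.lhom_ext fun x b => ?_
  rcases hd : x.decons with _ | ⟨e', y⟩
  · simp [genAction, hd]
  · obtain ⟨hy, -⟩ := eq_cons_of_decons_eq_some hd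
    by_cases he : e' = e
    · subst he
      simp [genAction, hd, hy]
    · simp [genAction, hd, he]

lemma genOp_ghost_mul_vertex (e : E) :
    genOp K s r (.ghost e) * genOp K s r (.vertex (s e)) = genOp K s r (.ghost e) := by
  refine Finsupp.lhom_ext fun x b => ?_
  rcases hd : x.decons with _ | ⟨e', y⟩
  · by_cases h : x.source = s e <;> simp [genAction, hd, h]
  · obtain ⟨hy, rfl⟩ := eq_cons_of_decons_eq_some hd
    by_cases he : e' = e
    · subst he
      simp [genAction, hd, source_cons]
    · by_cases h : s e' = s e <;> simp [genAction, hd, he, h, source_cons]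

lemma genOp_ghost_mul_edge (e : E) :
    genOp K s r (.ghost e) * genOp K s r (.edge e) = genOp K s r (.vertex (r e)) := by
  refine Finsupp.lhom_ext fun x b => ?_
  by_cases h : x.source = r e <;> simp [genAction, h, decons_cons]

lemma genOp_ghost_mul_edge_of_ne {e f : E} (hef : e ≠ f) :
    genOp K s r (.ghost e) * genOp K s r (.edge f) = 0 := by
  refine Finsupp.lhom_ext fun x b => ?_
  by_cases h : x.source = r f <;> simp [genAction, h, decons_cons, hef.symm]

lemma genOp_vertex_eq_sum {v : V} (hfin : {e : E | s e = v}.Finite)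
    (hne : {e : E | s e = v}.Nonempty) :
    genOp K s r (.vertex v) =
      ∑ e ∈ hfin.toFinset, genOp K s r (.edge e) * genOp K s r (.ghost e) := by
  classical
  refine Finsupp.lhom_ext fun x b => ?_
  rcases hd : x.decons with _ | ⟨e₀, y⟩
  · have hx : x.source ≠ v := fun h =>
      not_isRegularVertex_of_decons_eq_none hd (h ▸ ⟨hfin, hne⟩)
    simp [genAction, hd, hx]
  · obtain ⟨hy, rfl⟩ := eq_cons_of_decons_eq_some hd
    have hterm (e : E) :
        (genOp K s r (.edge e) * genOp K s r (.ghost e)) (.single (y.cons e₀ hy) b) =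
          if e₀ = e then b • Finsupp.single (y.cons e₀ hy) 1 else 0 := by
      by_cases he : e₀ = e
      · subst he
        simp [genAction, decons_cons, hy]
      · simp [genAction, decons_cons, he]
    simp [Finset.sum_apply, hterm, genAction, source_cons]

lemma lift_genOp_eq_of_lparel {a b : FreeAlgebra K (LPAGen V E)} (h : LPARel K s r a b) :
    FreeAlgebra.lift K (genOp K s r) a = FreeAlgebra.lift K (genOp K s r) b := by
  induction h <;> simp only [map_mul, map_zero, map_sum, FreeAlgebra.lift_ι_apply]
  · exact genOp_vertex_mul_self _
  · exact genOp_vertex_mul_vertex_of_ne ‹_›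
  · exact genOp_vertex_mul_edge _
  · exact genOp_edge_mul_vertex _
  · exact genOp_vertex_mul_ghost _
  · exact genOp_ghost_mul_vertex _
  · exact genOp_ghost_mul_edge _
  · exact genOp_ghost_mul_edge_of_ne ‹_›
  · exact genOp_vertex_eq_sum _ ‹_›

variable (K s r) in
noncomputable def boundaryPathRep : LPAU K s r →ₐ[K] Module.End K (BoundaryPath s r →₀ K) :=
  RingQuot.liftAlgHom K ⟨FreeAlgebra.lift K (genOp K s r), fun _ _ => lift_genOp_eq_of_lparel⟩

lemma boundaryPathRep_gen (g : LPAGen V E) :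
    boundaryPathRep K s r (gen K s r g) = genOp K s r g := by
  rw [boundaryPathRep, gen, RingQuot.liftAlgHom_mkAlgHom_apply, FreeAlgebra.lift_ι_apply]

lemma vertexEl_sub_pathEl_mul_ghostPathEl_cons_ne_zero {v : V} {e f : E} {es : List E}
    (hfv : s f = v) (hfe : f ≠ e) :
    vertexEl K s r v - pathEl K s r v (e :: es) * ghostPathEl K s r v (e :: es) ≠ 0 := by
  obtain ⟨y, hy⟩ := exists_source_eq (s := s) (r := r) (r f)
  set x : BoundaryPath s r →₀ K := .single (y.cons f hy) 1
  have hvx : boundaryPathRep K s r (vertexEl K s r v) x = x := by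
    simp [x, vertexEl, boundaryPathRep_gen, genAction, source_cons, hfv]
  have hex : boundaryPathRep K s r (ghostEl K s r e) x = 0 := by
    simp [x, ghostEl, boundaryPathRep_gen, genAction, decons_cons, hfe]
  have hQx : boundaryPathRep K s r (ghostPathEl K s r v (e :: es)) x = 0 := by
    simp [ghostPathEl, Module.End.mul_apply, hvx, hex]
  intro h
  have := congr(boundaryPathRep K s r $h x)
  simp [Module.End.mul_apply, hvx, hQx, x] at this

lemma IsCycle.vertexEl_sub_pathEl_mul_ghostPathEl_ne_zero {v : V} {es : List E} {f : E}
    (hcyc : IsCycle s r v es) (hexit : ∃ e ∈ es, s f = s e ∧ f ≠ e) (hfv : s f = v) :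
    vertexEl K s r v - pathEl K s r v es * ghostPathEl K s r v es ≠ 0 := by
  obtain ⟨e, he, hfe_source, hfe⟩ := hexit
  obtain ⟨hne, hpath, hnodup⟩ := hcyc
  obtain ⟨e₁, es, rfl⟩ := List.exists_cons_of_ne_nil hne
  have : e = e₁ := List.inj_on_of_nodup_map hnodup he List.mem_cons_self
    (by rw [← hfe_source, hfv, hpath.source_eq])
  exact vertexEl_sub_pathEl_mul_ghostPathEl_cons_ne_zero hfv (this ▸ hfe)

end Representation

/-- If `c` is a cycle based at a vertex `v` in a graph `E`, and `e` is an exit for `c`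
with `s(e) = v`, then the left `L_K(E)`-module `L_K(E)v` decomposes as the direct sum
`L_K(E)cc* ⊕ L_K(E)(v - cc*)`, where `L_K(E)cc* ≅ L_K(E)v` as left modules and
`L_K(E)(v - cc*) ≠ 0`.  In particular `L_K(E)v` has a nontrivial direct summand
isomorphic to itself. -/
theorem cycle_with_exit_infinite_summand (K V E : Type) [Field K] (s r : E → V)
    (v : V) (es : List E) (hcyc : IsCycle s r v es)
    (f : E) (hexit : ∃ e ∈ es, s f = s e ∧ f ≠ e) (hsf : s f = v) :
    Submodule.span (LPAU K s r) {vertexEl K s r v} =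
        Submodule.span (LPAU K s r) {pathEl K s r v es * ghostPathEl K s r v es} ⊔
          Submodule.span (LPAU K s r)
            {vertexEl K s r v - pathEl K s r v es * ghostPathEl K s r v es} ∧
      Submodule.span (LPAU K s r) {pathEl K s r v es * ghostPathEl K s r v es} ⊓
          Submodule.span (LPAU K s r)
            {vertexEl K s r v - pathEl K s r v es * ghostPathEl K s r v es} = ⊥ ∧
      Nonempty
        ((Submodule.span (LPAU K s r) {pathEl K s r v es * ghostPathEl K s r v es}) ≃ₗ[LPAU K s r]
          (Submodule.span (LPAU K s r) {vertexEl K s r v})) ∧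
      Submodule.span (LPAU K s r)
          {vertexEl K s r v - pathEl K s r v es * ghostPathEl K s r v es} ≠ ⊥ := by
  set c := pathEl K s r v es
  set c' := ghostPathEl K s r v es
  have hpath := hcyc.2.1
  have hc'c : c' * c = vertexEl K s r v := hpath.ghostPathEl_mul_pathEl
  have hcc'c : c * c' * c = c := by rw [mul_assoc, hc'c, hpath.pathEl_mul_vertexEl]
  refine ⟨?_, ?_, ⟨?_⟩, ?_⟩
  · exact Submodule.span_singleton_eq_span_sup_span_sub (vertexEl_mul_self v)
      (by rw [mul_assoc, ghostPathEl_mul_vertexEl])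
  · exact Submodule.span_inf_span_sub_eq_bot (by rw [IsIdempotentElem, ← mul_assoc, hcc'c])
      (by rw [← mul_assoc, vertexEl_mul_pathEl])
  · exact (Submodule.spanMulEquivSpanMul hcc'c).trans (.ofEq _ _ (by rw [hc'c]))
  · rw [Ne, Submodule.span_singleton_eq_bot]
    exact hcyc.vertexEl_sub_pathEl_mul_ghostPathEl_ne_zero hexit hsf
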